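/- (Grönwall's lemma, integral form, monotone source.) Let T ∈ (0, ∞]. Let α : [0, T) → ℝ be essentially bounded measurable, λ : [0, T) → ℝ integrable with λ(t) ≥ 0 a.e., and let ψ : [0, T) → ℝ be monotone increasing and continuous. Define γ(t) := ∫₀ᵗ λ(τ) dτ. If α(t) ≤ ψ(t) + ∫₀ᵗ λ(s) α(s) ds for almost every t ∈ [0, T), then for almost every t ∈ [0, T), α(t) ≤ e^{γ(t)} ψ(t). -/

import Mathlib

/-!
Put `γ(s) = ∫₀ˢ λ` and `β(s) = ∫₀ˢ λ α`; both are absolutely continuous on `[0, t]`, with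
derivatives `λ` and `λ α` almost everywhere. Monotonicity of `ψ` gives `α ≤ ψ(t) + β` a.e.
on `[0, t]`, hence, as `λ ≥ 0`,
`(e^{-γ} β)' = e^{-γ} λ (α - β) ≤ ψ(t) λ e^{-γ} = -ψ(t) (e^{-γ})'` a.e.
Integrating with the fundamental theorem of calculus for absolutely continuous functions
gives `β(t) ≤ ψ(t) (e^{γ(t)} - 1)`, so `α(t) ≤ ψ(t) + β(t) ≤ e^{γ(t)} ψ(t)`.
-/

open MeasureTheory Filter Set

theorem LipschitzOnWith.comp_absolutelyContinuousOnInterval {X Y : Type*}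
    [PseudoMetricSpace X] [PseudoMetricSpace Y] {g : X → Y} {f : ℝ → X} {K : NNReal}
    {s : Set X} {a b : ℝ} (hg : LipschitzOnWith K g s)
    (hf : AbsolutelyContinuousOnInterval f a b) (hfs : MapsTo f (uIcc a b) s) :
    AbsolutelyContinuousOnInterval (g ∘ f) a b := by
  have hKf := (tendsto_const_nhds (x := (K : ℝ))).mul hf
  rw [mul_zero] at hKf
  refine squeeze_zero' (Eventually.of_forall fun _ ↦ Finset.sum_nonneg fun _ _ ↦ dist_nonneg)
    ?_ hKf
  filter_upwards [mem_inf_of_right (mem_principal_self _)] with E hE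
  rw [Finset.mul_sum]
  exact Finset.sum_le_sum fun i hi ↦
    hg.dist_le_mul _ (hfs (hE.1 i hi).1) _ (hfs (hE.1 i hi).2)

theorem ContDiff.comp_absolutelyContinuousOnInterval {F : Type*} [NormedAddCommGroup F]
    [NormedSpace ℝ F] {g : ℝ → F} {f : ℝ → ℝ} {a b : ℝ} (hg : ContDiff ℝ 1 g)
    (hf : AbsolutelyContinuousOnInterval f a b) :
    AbsolutelyContinuousOnInterval (g ∘ f) a b := by
  obtain ⟨C, hC⟩ := hf.exists_bound
  obtain ⟨K, hK⟩ := hg.contDiffOn.exists_lipschitzOnWith one_ne_zero (convex_Icc (-C) C)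
    isCompact_Icc
  exact hK.comp_absolutelyContinuousOnInterval hf fun x hx ↦ abs_le.mp (hC x hx)


theorem integral_mul_le_of_le_const_add_integral {lam α : ℝ → ℝ} {a b c : ℝ}
    (hab : a ≤ b)
    (hlam : IntervalIntegrable lam volume a b)
    (hlamα : IntervalIntegrable (fun s ↦ lam s * α s) volume a b)
    (hlam_nonneg : ∀ᵐ s ∂volume.restrict (Icc a b), 0 ≤ lam s)
    (hα : ∀ᵐ s ∂volume.restrict (Icc a b), α s ≤ c + ∫ u in a..s, lam u * α u) :
    ∫ s in a..b, lam s * α s ≤ c * (Real.exp (∫ s in a..b, lam s) - 1) := by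
  set γ : ℝ → ℝ := fun x ↦ ∫ s in a..x, lam s
  set β : ℝ → ℝ := fun x ↦ ∫ s in a..x, lam s * α s
  set E : ℝ → ℝ := fun x ↦ Real.exp (-γ x)
  have ha : a ∈ uIcc a b := left_mem_uIcc
  have hγ := hlam.absolutelyContinuousOnInterval_intervalIntegral ha
  have hβ := hlamα.absolutelyContinuousOnInterval_intervalIntegral ha
  have hE : AbsolutelyContinuousOnInterval E a b :=
    Real.contDiff_exp.comp_absolutelyContinuousOnInterval hγ.neg
  have hEβ := hE.fun_mul hβ
  have hderiv : ∀ᵐ s ∂volume.restrict (Icc a b),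
      HasDerivAt E (E s * -lam s) s ∧ HasDerivAt β (lam s * α s) s := by
    rw [← uIcc_of_le hab, ae_restrict_iff' measurableSet_uIcc]
    filter_upwards [hlam.ae_hasDerivAt_integral, hlamα.ae_hasDerivAt_integral] with s hγs hβs hs
    exact ⟨(hγs hs a ha).neg.exp, hβs hs a ha⟩
  have hE_deriv : ∀ᵐ s ∂volume.restrict (Icc a b), deriv E s = -(lam s * E s) := by
    filter_upwards [hderiv] with s hs
    rw [hs.1.deriv]
    ring
  have hEβ_deriv : ∀ᵐ s ∂volume.restrict (Icc a b),
      deriv (fun x ↦ E x * β x) s = E s * lam s * (α s - β s) := by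
    filter_upwards [hderiv] with s hs
    rw [(hs.1.fun_mul hs.2).deriv]
    ring
  have hmono : ∫ s in a..b, deriv (fun x ↦ E x * β x) s ≤ ∫ s in a..b, -c * deriv E s := by
    refine intervalIntegral.integral_mono_ae_restrict hab hEβ.intervalIntegrable_deriv
      (hE.intervalIntegrable_deriv.const_mul _) ?_
    filter_upwards [hE_deriv, hEβ_deriv, hlam_nonneg, hα] with s hEs hEβs hlams hαs
    rw [hEs, hEβs]
    have : 0 ≤ E s * lam s := mul_nonneg (Real.exp_pos _).le hlams
    nlinarith
  rw [hEβ.integral_deriv_eq_sub, intervalIntegral.integral_const_mul,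
    hE.integral_deriv_eq_sub] at hmono
  simp only [E, γ, intervalIntegral.integral_same, neg_zero, Real.exp_zero, mul_zero,
    sub_zero] at hmono
  set P := ∫ s in a..b, lam s
  have hexp : Real.exp P * Real.exp (-P) = 1 := by
    rw [← Real.exp_add, add_neg_cancel, Real.exp_zero]
  calc ∫ s in a..b, lam s * α s
      = Real.exp P * (Real.exp (-P) * ∫ s in a..b, lam s * α s) := by
        rw [← mul_assoc, hexp, one_mul]
    _ ≤ Real.exp P * (-c * (Real.exp (-P) - 1)) :=
        mul_le_mul_of_nonneg_left hmono (Real.exp_pos P).le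
    _ = c * (Real.exp P - 1) := by linear_combination (-c) * hexp

theorem gronwall_integral_monotone_source_general
    (T : EReal)
    (α ψ lam : ℝ → ℝ)
    (S : Set ℝ) (hS : S = {t : ℝ | 0 ≤ t ∧ (t : EReal) < T})
    (hα_meas : Measurable α)
    (hα_bdd : ∃ C : ℝ, ∀ᵐ t ∂(volume.restrict S), |α t| ≤ C)
    (hlam_int : IntegrableOn lam S)
    (hlam_nonneg : ∀ᵐ t ∂(volume.restrict S), 0 ≤ lam t)
    (hψ_mono : MonotoneOn ψ S)
    (h : ∀ᵐ t ∂(volume.restrict S), α t ≤ ψ t + ∫ s in (0:ℝ)..t, lam s * α s) :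
    ∀ᵐ t ∂(volume.restrict S),
      α t ≤ Real.exp (∫ τ in (0:ℝ)..t, lam τ) * ψ t := by
  have hS_meas : MeasurableSet S := hS ▸
    measurableSet_Ici.inter (measurableSet_lt measurable_coe_real_ereal measurable_const)
  obtain ⟨C, hC⟩ := hα_bdd
  have hlamα : IntegrableOn (fun s ↦ lam s * α s) S :=
    hlam_int.mul_bdd hα_meas.aestronglyMeasurable.restrict (by simpa using hC)
  filter_upwards [h, ae_restrict_mem hS_meas] with t ht htS
  have ht0 : 0 ≤ t := (hS ▸ htS).1
  have hIcc : Icc 0 t ⊆ S := fun s hs ↦ hS ▸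
    ⟨hs.1, (EReal.coe_le_coe_iff.mpr hs.2).trans_lt (hS ▸ htS).2⟩
  have hα_Icc :
      ∀ᵐ s ∂volume.restrict (Icc 0 t), α s ≤ ψ t + ∫ u in (0:ℝ)..s, lam u * α u := by
    filter_upwards [ae_restrict_of_ae_restrict_of_subset hIcc h, ae_restrict_mem measurableSet_Icc]
      with s hs hsIcc
    linarith [hψ_mono (hIcc hsIcc) htS hsIcc.2]
  have hbound := integral_mul_le_of_le_const_add_integral ht0
    ((intervalIntegrable_iff_integrableOn_Icc_of_le ht0).mpr (hlam_int.mono_set hIcc))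
    ((intervalIntegrable_iff_integrableOn_Icc_of_le ht0).mpr (hlamα.mono_set hIcc))
    (ae_restrict_of_ae_restrict_of_subset hIcc hlam_nonneg) hα_Icc
  linarith

/-- Grönwall's lemma, integral form, with a monotonically increasing continuous
source `ψ`, on the interval `[0, T)` with `T ∈ (0, ∞]` (encoded as `T : EReal`
with `0 < T`). -/
theorem gronwall_integral_monotone_source
    (T : EReal) (hT : 0 < T)
    (α ψ lam : ℝ → ℝ)
    (S : Set ℝ) (hS : S = {t : ℝ | 0 ≤ t ∧ (t : EReal) < T})
    (hα_meas : Measurable α)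
    (hα_bdd : ∃ C : ℝ, ∀ᵐ t ∂(volume.restrict S), |α t| ≤ C)
    (hlam_int : IntegrableOn lam S)
    (hlam_nonneg : ∀ᵐ t ∂(volume.restrict S), 0 ≤ lam t)
    (hψ_mono : MonotoneOn ψ S)
    (hψ_cont : ContinuousOn ψ S)
    (h : ∀ᵐ t ∂(volume.restrict S), α t ≤ ψ t + ∫ s in (0:ℝ)..t, lam s * α s) :
    ∀ᵐ t ∂(volume.restrict S),
      α t ≤ Real.exp (∫ τ in (0:ℝ)..t, lam τ) * ψ t :=
  gronwall_integral_monotone_source_general T α ψ lam S hS hα_meas hα_bdd hlam_int hlam_nonneg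
    hψ_mono h
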